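/- arXiv:2407.14297 — 2 statements merged into one kernel-verified Lean document; each statement's English description precedes it below -/
import Mathlib

section
/- Let D ⋉ δ denote the tangent group SE₂(3) ⋉ se₂(3) with product (D₁, δ₁)(D₂, δ₂) = (D₁D₂, δ₁ + D₁δ₂D₁⁻¹). Define φ : (SE₂(3) ⋉ se₂(3)) × (SE₂(3) × ℝ⁹) → SE₂(3) × ℝ⁹ by φ((D,δ), (T, b)) = (TD, Ad_{D⁻¹}(b^∧ - δ)^∨), where Ad is the adjoint of SE₂(3). Then φ is a transitive right group action. -/
open Matrix

/-- The `se₂(3)` hat map `ℝ⁹ → ℝ^{5×5}`: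
`x = (ω, v, w) ↦ [[ω^∧, v, w],[0,0,0],[0,0,0]]`. -/
def hat9 (x : Fin 9 → ℝ) : Matrix (Fin 5) (Fin 5) ℝ :=
  !![0, -x 2, x 1, x 3, x 6;
     x 2, 0, -x 0, x 4, x 7;
     -x 1, x 0, 0, x 5, x 8;
     0, 0, 0, 0, 0;
     0, 0, 0, 0, 0]

/-- The `se₂(3)` vee map, inverse of `hat9` on `se₂(3)`. -/
def vee9 (m : Matrix (Fin 5) (Fin 5) ℝ) : Fin 9 → ℝ :=
  ![m 2 1, m 0 2, m 1 0, m 0 3, m 1 3, m 2 3, m 0 4, m 1 4, m 2 4]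

/-- Membership in `SE₂(3)`: 5×5 matrices `[[A,a,b],[0,1,0],[0,0,1]]` with `A ∈ SO(3)`. -/
def SE23 (M : Matrix (Fin 5) (Fin 5) ℝ) : Prop :=
  ∃ (A : Matrix (Fin 3) (Fin 3) ℝ) (a b : Fin 3 → ℝ),
    A * Aᵀ = 1 ∧ Aᵀ * A = 1 ∧ A.det = 1 ∧
    M = !![A 0 0, A 0 1, A 0 2, a 0, b 0;
           A 1 0, A 1 1, A 1 2, a 1, b 1;
           A 2 0, A 2 1, A 2 2, a 2, b 2;
           0, 0, 0, 1, 0;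
           0, 0, 0, 0, 1]

/-- Membership in the Lie algebra `se₂(3)` (image of the hat map). -/
def se23 (m : Matrix (Fin 5) (Fin 5) ℝ) : Prop := ∃ x : Fin 9 → ℝ, m = hat9 x

/-- Product of the tangent group `SE₂(3) ⋉ se₂(3)`:
`(D₁, δ₁)(D₂, δ₂) = (D₁D₂, δ₁ + D₁δ₂D₁⁻¹)`. -/
noncomputable def tgProd (X Y : Matrix (Fin 5) (Fin 5) ℝ × Matrix (Fin 5) (Fin 5) ℝ) :
    Matrix (Fin 5) (Fin 5) ℝ × Matrix (Fin 5) (Fin 5) ℝ :=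
  (X.1 * Y.1, X.2 + X.1 * Y.2 * X.1⁻¹)

/-- The action `φ((D,δ), (T, b)) = (TD, Ad_{D⁻¹}(b^∧ - δ)^∨)` of the tangent group
on `SE₂(3) × ℝ⁹`, where `Ad_{D⁻¹}(u) = D⁻¹ u D`. -/
noncomputable def phiTG (X : Matrix (Fin 5) (Fin 5) ℝ × Matrix (Fin 5) (Fin 5) ℝ)
    (ξ : Matrix (Fin 5) (Fin 5) ℝ × (Fin 9 → ℝ)) :
    Matrix (Fin 5) (Fin 5) ℝ × (Fin 9 → ℝ) :=
  (ξ.1 * X.1, vee9 (X.1⁻¹ * (hat9 ξ.2 - X.2) * X.1))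

/-!
Elements of `SE₂(3)` are invertible, with inverses of the same block shape, and conjugation by
them preserves `se₂(3)`; hence `hat9 ∘ vee9` is the identity on every matrix the action
produces. The action law then reduces to `Ad_{(YX)⁻¹} = Ad_{X⁻¹} ∘ Ad_{Y⁻¹}`, and
transitivity to the witness `D = T₁⁻¹T₂`, `δ = b₁^∧ - Ad_D(b₂^∧)`.
-/

section ExtendedPose

variable {R : Type*} [CommRing R]

def extendedPose (A : Matrix (Fin 3) (Fin 3) R) (a b : Fin 3 → R) : Matrix (Fin 5) (Fin 5) R :=
  !![A 0 0, A 0 1, A 0 2, a 0, b 0;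
     A 1 0, A 1 1, A 1 2, a 1, b 1;
     A 2 0, A 2 1, A 2 2, a 2, b 2;
     0, 0, 0, 1, 0;
     0, 0, 0, 0, 1]

theorem extendedPose_one : extendedPose (1 : Matrix (Fin 3) (Fin 3) R) 0 0 = 1 := by
  ext i j
  fin_cases i <;> fin_cases j <;> simp [extendedPose, one_apply]

theorem extendedPose_mul (A₁ A₂ : Matrix (Fin 3) (Fin 3) R) (a₁ b₁ a₂ b₂ : Fin 3 → R) :
    extendedPose A₁ a₁ b₁ * extendedPose A₂ a₂ b₂ =
      extendedPose (A₁ * A₂) (A₁ *ᵥ a₂ + a₁) (A₁ *ᵥ b₂ + b₁) := by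
  ext i j
  fin_cases i <;> fin_cases j <;>
    simp [extendedPose, mul_apply, Fin.sum_univ_succ, mulVec, dotProduct] <;> ring

theorem extendedPose_mul_extendedPose_transpose {A : Matrix (Fin 3) (Fin 3) R}
    (hA : A * Aᵀ = 1) (a b : Fin 3 → R) :
    extendedPose A a b * extendedPose Aᵀ (-(Aᵀ *ᵥ a)) (-(Aᵀ *ᵥ b)) = 1 := by
  simp only [extendedPose_mul, hA, mulVec_neg, mulVec_mulVec, one_mulVec, neg_add_cancel,
    extendedPose_one]

theorem extendedPose_inv {A : Matrix (Fin 3) (Fin 3) R} (hA : A * Aᵀ = 1) (a b : Fin 3 → R) :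
    (extendedPose A a b)⁻¹ = extendedPose Aᵀ (-(Aᵀ *ᵥ a)) (-(Aᵀ *ᵥ b)) :=
  inv_eq_right_inv (extendedPose_mul_extendedPose_transpose hA a b)

end ExtendedPose

theorem vee9_hat9 (x : Fin 9 → ℝ) : vee9 (hat9 x) = x := by
  funext i
  fin_cases i <;> rfl

theorem hat9_sub (x y : Fin 9 → ℝ) : hat9 (x - y) = hat9 x - hat9 y := by
  ext i j
  fin_cases i <;> fin_cases j <;> simp [hat9] <;> ring

theorem se23_hat9 (x : Fin 9 → ℝ) : se23 (hat9 x) := ⟨x, rfl⟩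

theorem se23_iff_hat9_vee9 {m : Matrix (Fin 5) (Fin 5) ℝ} : se23 m ↔ hat9 (vee9 m) = m :=
  ⟨by rintro ⟨x, rfl⟩; rw [vee9_hat9], fun h => ⟨vee9 m, h.symm⟩⟩

namespace se23

theorem sub {m n : Matrix (Fin 5) (Fin 5) ℝ} (hm : se23 m) (hn : se23 n) : se23 (m - n) := by
  obtain ⟨x, rfl⟩ := hm
  obtain ⟨y, rfl⟩ := hn
  exact ⟨x - y, (hat9_sub x y).symm⟩

end se23

set_option maxHeartbeats 800000 in
/-- `Aᵀ ω^∧ A` is skew-symmetric for every `A`, and the last two rows stay zero. -/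
theorem se23_extendedPose_transpose_mul_mul (A : Matrix (Fin 3) (Fin 3) ℝ) (a b c d : Fin 3 → ℝ)
    (x : Fin 9 → ℝ) : se23 (extendedPose Aᵀ c d * hat9 x * extendedPose A a b) := by
  rw [se23_iff_hat9_vee9, mul_assoc]
  ext i j
  fin_cases i <;> fin_cases j <;>
    simp [hat9, vee9, extendedPose, mul_apply, Fin.sum_univ_five] <;> ring

theorem SE23_iff {M : Matrix (Fin 5) (Fin 5) ℝ} :
    SE23 M ↔ ∃ (A : Matrix (Fin 3) (Fin 3) ℝ) (a b : Fin 3 → ℝ),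
      A * Aᵀ = 1 ∧ Aᵀ * A = 1 ∧ A.det = 1 ∧ M = extendedPose A a b :=
  Iff.rfl

namespace SE23

variable {D E m : Matrix (Fin 5) (Fin 5) ℝ}

theorem mul (hD : SE23 D) (hE : SE23 E) : SE23 (D * E) := by
  obtain ⟨A, a, b, hA, hA', hdetA, rfl⟩ := SE23_iff.1 hD
  obtain ⟨B, c, d, hB, hB', hdetB, rfl⟩ := SE23_iff.1 hE
  refine SE23_iff.2 ⟨A * B, _, _, ?_, ?_, ?_, extendedPose_mul ..⟩
  · rw [transpose_mul, mul_assoc, ← mul_assoc B, hB, one_mul, hA]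
  · rw [transpose_mul, mul_assoc, ← mul_assoc Aᵀ, hA', one_mul, hB']
  · rw [det_mul, hdetA, hdetB, one_mul]

theorem inv (hD : SE23 D) : SE23 D⁻¹ := by
  obtain ⟨A, a, b, hA, hA', hdetA, rfl⟩ := SE23_iff.1 hD
  refine SE23_iff.2 ⟨Aᵀ, _, _, ?_, ?_, ?_, extendedPose_inv hA a b⟩
  · rw [transpose_transpose, hA']
  · rw [transpose_transpose, hA]
  · rw [det_transpose, hdetA]

theorem isUnit_det (hD : SE23 D) : IsUnit D.det := by
  obtain ⟨A, a, b, hA, -, -, rfl⟩ := SE23_iff.1 hD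
  exact isUnit_det_of_right_inverse (extendedPose_mul_extendedPose_transpose hA a b)

theorem mul_inv_cancel (hD : SE23 D) : D * D⁻¹ = 1 := mul_nonsing_inv D hD.isUnit_det

theorem inv_mul_cancel (hD : SE23 D) : D⁻¹ * D = 1 := nonsing_inv_mul D hD.isUnit_det

theorem se23_inv_mul_mul (hD : SE23 D) (hm : se23 m) : se23 (D⁻¹ * m * D) := by
  obtain ⟨A, a, b, hA, -, -, rfl⟩ := SE23_iff.1 hD
  obtain ⟨x, rfl⟩ := hm
  rw [extendedPose_inv hA]
  exact se23_extendedPose_transpose_mul_mul A a b _ _ x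

theorem se23_mul_mul_inv (hD : SE23 D) (hm : se23 m) : se23 (D * m * D⁻¹) := by
  simpa only [nonsing_inv_nonsing_inv D hD.isUnit_det] using hD.inv.se23_inv_mul_mul hm

end SE23

theorem phiTG_one_zero (ξ : Matrix (Fin 5) (Fin 5) ℝ × (Fin 9 → ℝ)) : phiTG (1, 0) ξ = ξ := by
  simp [phiTG, vee9_hat9]

theorem phiTG_phiTG (X : Matrix (Fin 5) (Fin 5) ℝ × Matrix (Fin 5) (Fin 5) ℝ)
    {Y : Matrix (Fin 5) (Fin 5) ℝ × Matrix (Fin 5) (Fin 5) ℝ} (hY₁ : SE23 Y.1) (hY₂ : se23 Y.2)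
    (ξ : Matrix (Fin 5) (Fin 5) ℝ × (Fin 9 → ℝ)) :
    phiTG X (phiTG Y ξ) = phiTG (tgProd Y X) ξ := by
  have hAd : se23 (Y.1⁻¹ * (hat9 ξ.2 - Y.2) * Y.1) :=
    hY₁.se23_inv_mul_mul ((se23_hat9 ξ.2).sub hY₂)
  refine Prod.ext (mul_assoc _ _ _) ?_
  simp only [phiTG, tgProd, se23_iff_hat9_vee9.1 hAd, Matrix.mul_inv_rev]
  congr 1
  calc X.1⁻¹ * (Y.1⁻¹ * (hat9 ξ.2 - Y.2) * Y.1 - X.2) * X.1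
      = X.1⁻¹ * (Y.1⁻¹ * (hat9 ξ.2 - Y.2) * Y.1 - (Y.1⁻¹ * Y.1) * X.2 * (Y.1⁻¹ * Y.1)) * X.1 := by
        rw [hY₁.inv_mul_cancel, one_mul, mul_one]
    _ = X.1⁻¹ * Y.1⁻¹ * (hat9 ξ.2 - (Y.2 + Y.1 * X.2 * Y.1⁻¹)) * (Y.1 * X.1) := by noncomm_ring

theorem exists_phiTG_eq {T₁ T₂ : Matrix (Fin 5) (Fin 5) ℝ} (h₁ : SE23 T₁) (h₂ : SE23 T₂)
    (b₁ b₂ : Fin 9 → ℝ) :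
    ∃ D δ : Matrix (Fin 5) (Fin 5) ℝ, SE23 D ∧ se23 δ ∧ phiTG (D, δ) (T₁, b₁) = (T₂, b₂) := by
  set D := T₁⁻¹ * T₂
  have hD : SE23 D := h₁.inv.mul h₂
  refine ⟨D, hat9 b₁ - D * hat9 b₂ * D⁻¹, hD,
    (se23_hat9 b₁).sub (hD.se23_mul_mul_inv (se23_hat9 b₂)), Prod.ext ?_ ?_⟩
  · simp only [phiTG, D, ← mul_assoc, h₁.mul_inv_cancel, one_mul]
  · simp only [phiTG, sub_sub_cancel, ← mul_assoc, hD.inv_mul_cancel, one_mul]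
    simp only [mul_assoc, hD.inv_mul_cancel, mul_one, vee9_hat9]

/-- `φ((D,δ), (T, b)) = (TD, Ad_{D⁻¹}(b^∧ - δ)^∨)` is a transitive
right group action of the tangent group `SE₂(3) ⋉ se₂(3)` on `SE₂(3) × ℝ⁹`. -/
theorem tangent_group_action_transitive :
    -- identity law
    (∀ ξ : Matrix (Fin 5) (Fin 5) ℝ × (Fin 9 → ℝ), phiTG (1, 0) ξ = ξ) ∧
    -- right action law: φ(X, φ(Y, ξ)) = φ(Y·X, ξ)
    (∀ X Y : Matrix (Fin 5) (Fin 5) ℝ × Matrix (Fin 5) (Fin 5) ℝ,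
      SE23 X.1 → se23 X.2 → SE23 Y.1 → se23 Y.2 →
      ∀ ξ : Matrix (Fin 5) (Fin 5) ℝ × (Fin 9 → ℝ),
        phiTG X (phiTG Y ξ) = phiTG (tgProd Y X) ξ) ∧
    -- transitivity
    (∀ T₁ T₂ : Matrix (Fin 5) (Fin 5) ℝ, ∀ b₁ b₂ : Fin 9 → ℝ,
      SE23 T₁ → SE23 T₂ →
      ∃ D δ : Matrix (Fin 5) (Fin 5) ℝ, SE23 D ∧ se23 δ ∧
        phiTG (D, δ) (T₁, b₁) = (T₂, b₂)) :=
  ⟨phiTG_one_zero, fun X _ _ _ hY₁ hY₂ => phiTG_phiTG X hY₁ hY₂,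
    fun _ _ b₁ b₂ h₁ h₂ => exists_phiTG_eq h₁ h₂ b₁ b₂⟩
end

section
/- The INS lift is invariant under gravity-preserving frame changes: with Λ₁(T, b, u) = (W - B + N) + T⁻¹(G - N)T where G = [[0₃ₓ₃, g e₃, 0],[0,0,0],[0,0,0]] and N the matrix with single 1 in entry (4,5), and H = [[R_H, 0, p_H],[0,1,0],[0,0,1]] ∈ SE₂(3) with R_H e₃-axial rotation (R_H e₃ = e₃), one has Λ₁(H⁻¹T, b, u) = Λ₁(T, b, u); the key identity is H(G - N)H⁻¹ = G - N. -/
open Matrix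

/-- The matrix `N`, with a single 1 in entry (4,5). -/
def Nmat : Matrix (Fin 5) (Fin 5) ℝ :=
  !![0, 0, 0, 0, 0;
     0, 0, 0, 0, 0;
     0, 0, 0, 0, 0;
     0, 0, 0, 0, 1;
     0, 0, 0, 0, 0]

/-- The gravity matrix `G = [[0₃ₓ₃, g e₃, 0],[0,0,0],[0,0,0]]` for gravity magnitude `g`. -/
def Gmat (g : ℝ) : Matrix (Fin 5) (Fin 5) ℝ :=
  hat9 ![0, 0, 0, 0, 0, g, 0, 0, 0]

/-- `Λ₁(T, b, u) = (W - B + N) + T⁻¹(G - N)T`, with `W = w^∧`, `B = b^∧`. -/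
noncomputable def Lam1 (g : ℝ) (T : Matrix (Fin 5) (Fin 5) ℝ) (b w : Fin 9 → ℝ) :
    Matrix (Fin 5) (Fin 5) ℝ :=
  (hat9 w - hat9 b + Nmat) + T⁻¹ * (Gmat g - Nmat) * T

/-!
The frame change `H = [[R, 0, p],[0,1,0],[0,0,1]]` commutes with `G - N`, whose only nonzero
entries are `g` at (3,4) and `-1` at (4,5): multiplying by `H` on the right only sees its
fourth and fifth rows, which are those of the identity, and multiplying on the left only sees
its third and fourth columns, `(R e₃, 0, 0) = e₃` and `e₄`. These matrices compose like the
affine maps `x ↦ R x + p`, so `H` is invertible when `R` is orthogonal, and commuting gives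
`H(G - N)H⁻¹ = G - N`. Conjugating by `H⁻¹T` is conjugating by `H⁻¹` and then by `T`, hence
the lift is unchanged.
-/

section gravityFrame

variable {α : Type*} [CommRing α]

def gravityFrame (R : Matrix (Fin 3) (Fin 3) α) (p : Fin 3 → α) : Matrix (Fin 5) (Fin 5) α :=
  !![R 0 0, R 0 1, R 0 2, 0, p 0;
     R 1 0, R 1 1, R 1 2, 0, p 1;
     R 2 0, R 2 1, R 2 2, 0, p 2;
     0, 0, 0, 1, 0;
     0, 0, 0, 0, 1]

theorem gravityFrame_mul (R S : Matrix (Fin 3) (Fin 3) α) (p q : Fin 3 → α) :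
    gravityFrame R p * gravityFrame S q = gravityFrame (R * S) (R *ᵥ q + p) := by
  ext i j
  fin_cases i <;> fin_cases j <;>
    simp [gravityFrame, Matrix.mul_apply, Fin.sum_univ_succ, mulVec, dotProduct] <;> ring

theorem gravityFrame_one : gravityFrame (1 : Matrix (Fin 3) (Fin 3) α) 0 = 1 := by
  ext i j
  fin_cases i <;> fin_cases j <;> simp [gravityFrame]

theorem isUnit_det_gravityFrame {R : Matrix (Fin 3) (Fin 3) α} (hR : R * Rᵀ = 1)
    (p : Fin 3 → α) : IsUnit (gravityFrame R p).det := by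
  refine Matrix.isUnit_det_of_right_inverse (B := gravityFrame Rᵀ (-(Rᵀ *ᵥ p))) ?_
  rw [gravityFrame_mul, hR, mulVec_neg, mulVec_mulVec, hR, one_mulVec, neg_add_cancel,
    gravityFrame_one]

end gravityFrame

theorem Gmat_sub_Nmat (g : ℝ) :
    Gmat g - Nmat =
      !![0, 0, 0, 0, 0;
         0, 0, 0, 0, 0;
         0, 0, 0, g, 0;
         0, 0, 0, 0, -1;
         0, 0, 0, 0, 0] := by
  ext i j
  fin_cases i <;> fin_cases j <;> simp [Gmat, Nmat, hat9]

theorem Gmat_sub_Nmat_mul_gravityFrame (g : ℝ) (R : Matrix (Fin 3) (Fin 3) ℝ) (p : Fin 3 → ℝ) :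
    (Gmat g - Nmat) * gravityFrame R p = Gmat g - Nmat := by
  rw [Gmat_sub_Nmat]
  ext i j
  fin_cases i <;> fin_cases j <;> simp [gravityFrame, Matrix.mul_apply, Fin.sum_univ_succ]

theorem gravityFrame_mul_Gmat_sub_Nmat (g : ℝ) {R : Matrix (Fin 3) (Fin 3) ℝ}
    (hax : R *ᵥ ![0, 0, 1] = ![0, 0, 1]) (p : Fin 3 → ℝ) :
    gravityFrame R p * (Gmat g - Nmat) = Gmat g - Nmat := by
  have hcol : ∀ i, R i 2 = ![0, 0, 1] i := fun i => by
    simpa [mulVec, dotProduct, Fin.sum_univ_three] using congrFun hax i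
  rw [Gmat_sub_Nmat]
  ext i j
  fin_cases i <;> fin_cases j <;>
    simp [gravityFrame, Matrix.mul_apply, Fin.sum_univ_succ, hcol]

theorem Matrix.inv_mul_conj {n α : Type*} [Fintype n] [DecidableEq n] [CommRing α]
    {H : Matrix n n α} (hH : IsUnit H.det) (X T : Matrix n n α) :
    (H⁻¹ * T)⁻¹ * X * (H⁻¹ * T) = T⁻¹ * (H * X * H⁻¹) * T := by
  rw [Matrix.mul_inv_rev, Matrix.nonsing_inv_nonsing_inv _ hH]
  simp only [mul_assoc]

theorem Lam1_inv_mul_of_conj {g : ℝ} {H : Matrix (Fin 5) (Fin 5) ℝ} (hH : IsUnit H.det)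
    (hconj : H * (Gmat g - Nmat) * H⁻¹ = Gmat g - Nmat) (T : Matrix (Fin 5) (Fin 5) ℝ)
    (b w : Fin 9 → ℝ) : Lam1 g (H⁻¹ * T) b w = Lam1 g T b w := by
  rw [Lam1, Lam1, Matrix.inv_mul_conj hH, hconj]

theorem gravityFrame_conj_Gmat_sub_Nmat (g : ℝ) {R : Matrix (Fin 3) (Fin 3) ℝ}
    (hR : R * Rᵀ = 1) (hax : R *ᵥ ![0, 0, 1] = ![0, 0, 1]) (p : Fin 3 → ℝ) :
    gravityFrame R p * (Gmat g - Nmat) * (gravityFrame R p)⁻¹ = Gmat g - Nmat := by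
  calc gravityFrame R p * (Gmat g - Nmat) * (gravityFrame R p)⁻¹
      = (Gmat g - Nmat) * gravityFrame R p * (gravityFrame R p)⁻¹ := by
        rw [gravityFrame_mul_Gmat_sub_Nmat g hax, Gmat_sub_Nmat_mul_gravityFrame]
    _ = Gmat g - Nmat := mul_nonsing_inv_cancel_right _ _ (isUnit_det_gravityFrame hR p)

theorem lift_gravity_frame_invariant_general
    (g : ℝ) (R : Matrix (Fin 3) (Fin 3) ℝ)
    (hR : R * Rᵀ = 1)
    (hax : R.mulVec ![0, 0, 1] = ![0, 0, 1]) (p : Fin 3 → ℝ)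
    (T : Matrix (Fin 5) (Fin 5) ℝ) (b w : Fin 9 → ℝ) :
    (!![R 0 0, R 0 1, R 0 2, 0, p 0;
        R 1 0, R 1 1, R 1 2, 0, p 1;
        R 2 0, R 2 1, R 2 2, 0, p 2;
        0, 0, 0, 1, 0;
        0, 0, 0, 0, 1] * (Gmat g - Nmat) *
      (!![R 0 0, R 0 1, R 0 2, 0, p 0;
          R 1 0, R 1 1, R 1 2, 0, p 1;
          R 2 0, R 2 1, R 2 2, 0, p 2;
          0, 0, 0, 1, 0;
          0, 0, 0, 0, 1])⁻¹ = Gmat g - Nmat) ∧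
    Lam1 g ((!![R 0 0, R 0 1, R 0 2, 0, p 0;
                R 1 0, R 1 1, R 1 2, 0, p 1;
                R 2 0, R 2 1, R 2 2, 0, p 2;
                0, 0, 0, 1, 0;
                0, 0, 0, 0, 1])⁻¹ * T) b w = Lam1 g T b w := by
  have hconj := gravityFrame_conj_Gmat_sub_Nmat g hR hax p
  exact ⟨hconj, Lam1_inv_mul_of_conj (isUnit_det_gravityFrame hR p) hconj T b w⟩

/-- The INS lift is invariant under gravity-preserving frame changes:
for `H = [[R_H, 0, p_H],[0,1,0],[0,0,1]] ∈ SE₂(3)` with `R_H ∈ SO(3)` satisfying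
`R_H e₃ = e₃`, one has `H(G - N)H⁻¹ = G - N` and `Λ₁(H⁻¹T, b, u) = Λ₁(T, b, u)`. -/
theorem lift_gravity_frame_invariant
    (g : ℝ) (R : Matrix (Fin 3) (Fin 3) ℝ)
    (hR : R * Rᵀ = 1) (hdet : R.det = 1)
    (hax : R.mulVec ![0, 0, 1] = ![0, 0, 1]) (p : Fin 3 → ℝ)
    (T : Matrix (Fin 5) (Fin 5) ℝ) (hT : SE23 T) (b w : Fin 9 → ℝ) :
    (!![R 0 0, R 0 1, R 0 2, 0, p 0;
        R 1 0, R 1 1, R 1 2, 0, p 1;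
        R 2 0, R 2 1, R 2 2, 0, p 2;
        0, 0, 0, 1, 0;
        0, 0, 0, 0, 1] * (Gmat g - Nmat) *
      (!![R 0 0, R 0 1, R 0 2, 0, p 0;
          R 1 0, R 1 1, R 1 2, 0, p 1;
          R 2 0, R 2 1, R 2 2, 0, p 2;
          0, 0, 0, 1, 0;
          0, 0, 0, 0, 1])⁻¹ = Gmat g - Nmat) ∧
    Lam1 g ((!![R 0 0, R 0 1, R 0 2, 0, p 0;
                R 1 0, R 1 1, R 1 2, 0, p 1;
                R 2 0, R 2 1, R 2 2, 0, p 2;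
                0, 0, 0, 1, 0;
                0, 0, 0, 0, 1])⁻¹ * T) b w = Lam1 g T b w :=
  lift_gravity_frame_invariant_general g R hR hax p T b w
end
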